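/- The set of symmetric uniform-block matrices with a common partition-size vector p forms a quadratic subspace: it is a linear subspace of the symmetric p×p real matrices that is closed under squaring, i.e., if N is a symmetric uniform-block matrix then so is N². -/
import Mathlib


open Matrix BigOperators

/-- Block-diagonal expansion `A ∘ I[p]`: the `p × p` matrix `Bdiag(a₁ I_{p₁}, …, a_K I_{p_K})`,
indexed by the sigma type `Σ k, Fin (p k)`. -/
def blockI {K : ℕ} (p : Fin K → ℕ) (a : Fin K → ℝ) :
    Matrix (Σ k, Fin (p k)) (Σ k, Fin (p k)) ℝ :=
  Matrix.diagonal (fun i => a i.1)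

/-- Block all-ones expansion `B ∘ J[p]`: the `p × p` matrix whose `(k,k')` block is
`B k k' • 1_{p_k × p_{k'}}`. -/
def blockJ {K : ℕ} (p : Fin K → ℕ) (B : Matrix (Fin K) (Fin K) ℝ) :
    Matrix (Σ k, Fin (p k)) (Σ k, Fin (p k)) ℝ :=
  fun i j => B i.1 j.1

/-- `P = diag(p₁, …, p_K)`. -/
def Pmat {K : ℕ} (p : Fin K → ℕ) : Matrix (Fin K) (Fin K) ℝ :=
  Matrix.diagonal (fun k => (p k : ℝ))

lemma blockI_add {K : ℕ} (p : Fin K → ℕ) (a b : Fin K → ℝ) :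
    blockI p a + blockI p b = blockI p (a + b) := by
  simp [blockI, ← Matrix.diagonal_add]

lemma blockJ_add {K : ℕ} (p : Fin K → ℕ) (B C : Matrix (Fin K) (Fin K) ℝ) :
    blockJ p B + blockJ p C = blockJ p (B + C) := rfl

lemma blockI_smul {K : ℕ} (p : Fin K → ℕ) (c : ℝ) (a : Fin K → ℝ) :
    c • blockI p a = blockI p (c • a) := by
  simp [blockI, ← Matrix.diagonal_smul]

lemma blockJ_smul {K : ℕ} (p : Fin K → ℕ) (c : ℝ) (B : Matrix (Fin K) (Fin K) ℝ) :
    c • blockJ p B = blockJ p (c • B) := rfl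

lemma blockI_transpose {K : ℕ} (p : Fin K → ℕ) (a : Fin K → ℝ) :
    (blockI p a)ᵀ = blockI p a := Matrix.diagonal_transpose _

lemma blockJ_transpose {K : ℕ} (p : Fin K → ℕ) (B : Matrix (Fin K) (Fin K) ℝ) :
    (blockJ p B)ᵀ = blockJ p Bᵀ := rfl

lemma blockI_mul_blockI {K : ℕ} (p : Fin K → ℕ) (a b : Fin K → ℝ) :
    blockI p a * blockI p b = blockI p (a * b) := by
  simp [blockI, Matrix.diagonal_mul_diagonal]

lemma blockI_mul_blockJ {K : ℕ} (p : Fin K → ℕ) (a : Fin K → ℝ)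
    (B : Matrix (Fin K) (Fin K) ℝ) :
    blockI p a * blockJ p B = blockJ p (Matrix.diagonal a * B) := by
  ext i j
  simp [blockI, blockJ, Matrix.diagonal_mul]

lemma blockJ_mul_blockI {K : ℕ} (p : Fin K → ℕ) (a : Fin K → ℝ)
    (B : Matrix (Fin K) (Fin K) ℝ) :
    blockJ p B * blockI p a = blockJ p (B * Matrix.diagonal a) := by
  ext i j
  simp [blockI, blockJ, Matrix.mul_diagonal]

lemma blockJ_mul_blockJ {K : ℕ} (p : Fin K → ℕ) (B C : Matrix (Fin K) (Fin K) ℝ) :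
    blockJ p B * blockJ p C = blockJ p (B * Pmat p * C) := by
  ext i j
  simp only [blockJ, Pmat, Matrix.mul_assoc, Matrix.diagonal_mul, Matrix.mul_apply,
    Matrix.of_apply]
  rw [← Finset.univ_sigma_univ, Finset.sum_sigma]
  simp [Finset.sum_const, Finset.mul_sum, Matrix.diagonal_apply, mul_ite, mul_zero,
    Finset.sum_ite_eq', mul_comm, mul_assoc, mul_left_comm]

/-- The symmetric uniform-block matrices with a common partition-size vector form a quadratic
subspace of the symmetric `p × p` real matrices: a linear subspace, all of whose members are
symmetric, closed under matrix squaring. -/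
theorem uniformBlock_quadratic_subspace {K : ℕ} (p : Fin K → ℕ) :
    ∃ S : Set (Matrix (Σ k, Fin (p k)) (Σ k, Fin (p k)) ℝ),
      S = {N | ∃ (a : Fin K → ℝ) (B : Matrix (Fin K) (Fin K) ℝ),
              B.IsSymm ∧ N = blockI p a + blockJ p B} ∧
      (0 : Matrix (Σ k, Fin (p k)) (Σ k, Fin (p k)) ℝ) ∈ S ∧
      (∀ N M, N ∈ S → M ∈ S → N + M ∈ S) ∧
      (∀ (c : ℝ) N, N ∈ S → c • N ∈ S) ∧
      (∀ N, N ∈ S → N.IsSymm) ∧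
      (∀ N, N ∈ S → N * N ∈ S) := by
  refine ⟨_, rfl, ?_, ?_, ?_, ?_, ?_⟩
  · refine ⟨0, 0, Matrix.isSymm_zero, ?_⟩
    ext i j
    simp [blockI, blockJ, Matrix.diagonal_apply]
  · rintro N M ⟨a, B, hB, rfl⟩ ⟨a', B', hB', rfl⟩
    refine ⟨a + a', B + B', hB.add hB', ?_⟩
    rw [← blockI_add, ← blockJ_add]; abel
  · rintro c N ⟨a, B, hB, rfl⟩
    refine ⟨c • a, c • B, ?_, ?_⟩
    · unfold Matrix.IsSymm
      rw [Matrix.transpose_smul, hB]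
    · rw [← blockI_smul, ← blockJ_smul, smul_add]
  · rintro N ⟨a, B, hB, rfl⟩
    unfold Matrix.IsSymm
    rw [Matrix.transpose_add, blockI_transpose, blockJ_transpose, hB]
  · rintro N ⟨a, B, hB, rfl⟩
    refine ⟨a * a, Matrix.diagonal a * B + B * Matrix.diagonal a + B * Pmat p * B, ?_, ?_⟩
    · have hB' : Bᵀ = B := hB
      unfold Matrix.IsSymm
      simp only [Matrix.transpose_add, Matrix.transpose_mul, Matrix.diagonal_transpose, hB',
        Pmat, Matrix.diagonal_transpose]
      noncomm_ring
    · rw [add_mul, mul_add, mul_add, blockI_mul_blockI, blockI_mul_blockJ,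
        blockJ_mul_blockI, blockJ_mul_blockJ, ← blockJ_add, ← blockJ_add]
      abel
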